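/- arXiv:1409.8413 — 5 statements merged into one kernel-verified Lean document; each statement's English description precedes it below -/
import Mathlib

section
/- Let V be a vector space over ℂ, g : V → V a linear operator, and a ≠ b complex numbers. Suppose v ∈ V satisfies (g - a)^r v = 0. If W ⊆ V is a subspace invariant under g and (g - b)^s v ∈ W for some s ≥ r, then v ∈ W. -/
/-- Linear-algebra core of Lemma 3.2: if `(g - a)^r v = 0`, `W` is a `g`-invariant
subspace and `(g - b)^s v ∈ W` with `a ≠ b` and `r ≤ s`, then `v ∈ W`. -/
theorem mem_of_pow_sub_smul_mem
    {V : Type*} [AddCommGroup V] [Module ℂ V]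
    (g : Module.End ℂ V) (a b : ℂ) (hab : a ≠ b)
    (r s : ℕ) (hr : 0 < r) (hrs : r ≤ s)
    (v : V) (hv : ((g - a • 1) ^ r) v = 0)
    (W : Submodule ℂ V) (hW : ∀ w ∈ W, g w ∈ W)
    (hvW : ((g - b • 1) ^ s) v ∈ W) :
    v ∈ W := by
  have hc0 : a - b ≠ 0 := sub_ne_zero.mpr hab
  set t : ℂ := -(a - b)⁻¹ with ht
  have ht0 : t ≠ 0 := neg_ne_zero.mpr (inv_ne_zero hc0)
  set N : Module.End ℂ V := g - a • 1 with hN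
  set x : Module.End ℂ V := t • N with hx
  set q : Module.End ℂ V := (-t) • ∑ i ∈ Finset.range r, x ^ i with hq
  have h1 : g - b • 1 = t⁻¹ • (x - 1) := by
    rw [hx, smul_sub, smul_smul, inv_mul_cancel₀ ht0, one_smul]
    have h2 : t⁻¹ = -(a - b) := by rw [ht, inv_neg, inv_inv]
    rw [h2, hN]
    module
  have key : q * (g - b • 1) = 1 - x ^ r := by
    rw [h1, hq, smul_mul_smul_comm, geom_sum_mul,
      show -t * t⁻¹ = -1 by field_simp, neg_one_smul, neg_sub]
  have hcomm : Commute q (g - b • 1) := by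
    rw [h1, hq]
    have h3 : Commute (∑ i ∈ Finset.range r, x ^ i) (x - 1) :=
      (Commute.sum_left _ _ _ fun i _ =>
        (((Commute.refl x).pow_left i).sub_right (Commute.one_right _)))
    exact (h3.smul_left (-t)).smul_right t⁻¹
  have hxv : (x ^ r) v = 0 := by
    rw [hx, smul_pow, LinearMap.smul_apply, hv, smul_zero]
  have huv : (1 - x ^ r) v = v := by
    rw [LinearMap.sub_apply, Module.End.one_apply, hxv, sub_zero]
  have hkey2 : ∀ n : ℕ, ((1 - x ^ r) ^ n) v = v := by
    intro n
    induction n with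
    | zero => simp
    | succ n ih => rw [pow_succ, Module.End.mul_apply, huv, ih]
  have hqv : (q ^ s) (((g - b • 1) ^ s) v) = v := by
    rw [← Module.End.mul_apply, ← hcomm.mul_pow, key, hkey2]
  have hWN : ∀ w ∈ W, N w ∈ W := by
    intro w hw
    rw [hN, LinearMap.sub_apply, LinearMap.smul_apply, Module.End.one_apply]
    exact W.sub_mem (hW w hw) (W.smul_mem a hw)
  have hWx : ∀ w ∈ W, x w ∈ W := by
    intro w hw
    rw [hx, LinearMap.smul_apply]
    exact W.smul_mem t (hWN w hw)
  have hWxpow : ∀ i : ℕ, ∀ w ∈ W, (x ^ i) w ∈ W := by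
    intro i
    induction i with
    | zero => intro w hw; simpa using hw
    | succ n ih =>
      intro w hw
      rw [pow_succ, Module.End.mul_apply]
      exact ih _ (hWx w hw)
  have hWq : ∀ w ∈ W, q w ∈ W := by
    intro w hw
    rw [hq, LinearMap.smul_apply, LinearMap.sum_apply]
    exact W.smul_mem _ (W.sum_mem fun i _ => hWxpow i w hw)
  have hWqs : ∀ n : ℕ, ∀ w ∈ W, (q ^ n) w ∈ W := by
    intro n
    induction n with
    | zero => intro w hw; simpa using hw
    | succ n ih =>
      intro w hw
      rw [pow_succ, Module.End.mul_apply]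
      exact ih _ (hWq w hw)
  exact hqv ▸ hWqs s _ hvW
end

section
/- Let λ = (λ_{ij})_{1 ≤ j ≤ i ≤ n} be complex variables and for m ≤ n, k ≥ 1 define γ_{mk}(λ) = Σ_{i=1}^m (λ_{mi} + m - 1)^k ∏_{j ≠ i} (1 - 1/(λ_{mi} - λ_{mj})), defined on the locus where λ_{mi} ≠ λ_{mj} for i ≠ j. Then γ_{mk} is symmetric under any permutation of the variables λ_{m1}, …, λ_{mm}. -/
namespace Finset

theorem prod_erase_comp_perm {ι M : Type*} [Fintype ι] [DecidableEq ι] [CommMonoid M]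
    (σ : Equiv.Perm ι) (f : ι → M) (i : ι) :
    ∏ j ∈ univ.erase i, f (σ j) = ∏ j ∈ univ.erase (σ i), f j := by
  rw [← Equiv.coe_toEmbedding, ← prod_map (univ.erase i) σ.toEmbedding f, map_erase,
    map_univ_equiv, Equiv.coe_toEmbedding]

theorem sum_mul_prod_erase_comp_perm {ι R : Type*} [Fintype ι] [DecidableEq ι]
    [CommSemiring R] (σ : Equiv.Perm ι) (f : ι → R) (g : ι → ι → R) :
    ∑ i, f (σ i) * ∏ j ∈ univ.erase i, g (σ i) (σ j) =
      ∑ i, f i * ∏ j ∈ univ.erase i, g i j := by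
  simp_rw [prod_erase_comp_perm σ (g (σ _))]
  exact Equiv.sum_comp σ fun i => f i * ∏ j ∈ univ.erase i, g i j

end Finset

open Finset in
theorem gamma_symmetric_general
    (m k : ℕ) (x : Fin m → ℂ)
    (σ : Equiv.Perm (Fin m)) :
    ∑ i : Fin m, (x (σ i) + (m : ℂ) - 1) ^ k *
        ∏ j ∈ univ.erase i, (1 - 1 / (x (σ i) - x (σ j))) =
      ∑ i : Fin m, (x i + (m : ℂ) - 1) ^ k *
        ∏ j ∈ univ.erase i, (1 - 1 / (x i - x j)) :=
  sum_mul_prod_erase_comp_perm σ (fun i => (x i + (m : ℂ) - 1) ^ k)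
    (fun i j => 1 - 1 / (x i - x j))

open Finset in
/-- The Gelfand–Tsetlin generators `γ_{mk}` are symmetric under permutations of
the row-`m` variables. -/
theorem gamma_symmetric
    (m k : ℕ) (x : Fin m → ℂ) (hx : Function.Injective x)
    (σ : Equiv.Perm (Fin m)) :
    ∑ i : Fin m, (x (σ i) + (m : ℂ) - 1) ^ k *
        ∏ j ∈ univ.erase i, (1 - 1 / (x (σ i) - x (σ j))) =
      ∑ i : Fin m, (x i + (m : ℂ) - 1) ^ k *
        ∏ j ∈ univ.erase i, (1 - 1 / (x i - x j)) :=
  gamma_symmetric_general m k x σ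
end

section
/- Fix p, u and a generic tableau T(L) of height n, and let d = d_{pu}(T(L)). The number of distinct sets of the form Ω⁺_{p,u}(T(L+z)) := {(p,s,u) : l_{ps} + z_{ps} - (l_{p-1,u} + z_{p-1,u}) ∈ ℤ_{≥0}} as z ranges over ℤ^{n(n-1)/2} (with zero top row) equals d + 1. Consequently, the number of distinct sets of the form Ω⁺(T(L+z)) = ⊔_{p,u} Ω⁺_{p,u}(T(L+z)) equals ∏_{1 ≤ u ≤ p-1 < n} (d_{pu}(T(L)) + 1). -/
/-!
Write `t_s = l_{ps} - l_{p-1,u}` for the entries of row `p` integrally linked to `l_{p-1,u}`.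
A shift `z` puts `(p,s,u)` into `Ω⁺` exactly when `t_s ≥ z_{p-1,u} - z_{ps}`. In the top row `z`
vanishes, and below it genericity leaves at most one linked entry, so every `Ω⁺_{p,u}(T(L+z))`
is a threshold set `{s | t_s ≥ w}`; conversely, filling `z` row by row from the top realizes
any family of thresholds `w_{p,u}` at once. The `d` distinct values `t_s` have `d + 1`
threshold sets, and `Ω⁺` is the disjoint union of its blocks, whence the product.
-/

/-- The set `Ω⁺_{p,u}(T(L+z))` of triples `(p,s,u)` with fixed `p`, `u`. -/
def OmegaPlusPU (L : ℕ → ℕ → ℂ) (z : ℕ → ℕ → ℤ) (p u : ℕ) : Set (ℕ × ℕ × ℕ) :=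
  {t | t.1 = p ∧ t.2.2 = u ∧ 1 ≤ t.2.1 ∧ t.2.1 ≤ p ∧
    ∃ m : ℕ, (L p t.2.1 + (z p t.2.1 : ℂ)) - (L (p - 1) u + (z (p - 1) u : ℂ)) = (m : ℂ)}

/-- The full set `Ω⁺(T(L+z))`. -/
def OmegaPlusFull (n : ℕ) (L : ℕ → ℕ → ℂ) (z : ℕ → ℕ → ℤ) : Set (ℕ × ℕ × ℕ) :=
  {t | 1 < t.1 ∧ t.1 ≤ n ∧ 1 ≤ t.2.1 ∧ t.2.1 ≤ t.1 ∧ 1 ≤ t.2.2 ∧ t.2.2 ≤ t.1 - 1 ∧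
    ∃ m : ℕ, (L t.1 t.2.1 + (z t.1 t.2.1 : ℂ)) -
      (L (t.1 - 1) t.2.2 + (z (t.1 - 1) t.2.2 : ℂ)) = (m : ℂ)}

/-- `d_{pu}(T(L))`: number of distinct row-`p` entries integrally linked to `l_{p-1,u}`. -/
noncomputable def dPU (L : ℕ → ℕ → ℂ) (p u : ℕ) : ℕ :=
  Nat.card {v : ℂ | ∃ s, 1 ≤ s ∧ s ≤ p ∧ L p s = v ∧
    ∃ t : ℤ, L p s - L (p - 1) u = (t : ℂ)}

open Set

theorem exists_natCast_eq_add_intCast_iff {R : Type*} [AddGroupWithOne R] (x : R) (c : ℤ) :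
    (∃ m : ℕ, x + c = m) ↔ ∃ t : ℤ, x = t ∧ -c ≤ t := by
  constructor
  · rintro ⟨m, hm⟩
    exact ⟨m - c, by push_cast; rw [← hm, add_sub_cancel_right], by omega⟩
  · rintro ⟨t, rfl, ht⟩
    refine ⟨(t + c).toNat, ?_⟩
    rw [← Int.cast_natCast, Int.toNat_of_nonneg (by omega), Int.cast_add]

theorem card_range_inter_Ici {α : Type*} [LinearOrder α] [Nonempty α] [NoMaxOrder α] {T : Set α}
    (hT : T.Finite) : Nat.card (range fun w => T ∩ Ici w) = Nat.card T + 1 := by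
  have : Finite T := hT
  obtain ⟨M, hM⟩ := hT.bddAbove
  obtain ⟨top, htop⟩ := exists_gt M
  have hempty : T ∩ Ici top = ∅ :=
    eq_empty_of_forall_notMem fun t ⟨ht, hle⟩ => (hM ht).not_gt (htop.trans_le hle)
  -- `none` stands for a threshold above all of `T`
  let φ : Option T → range fun w => T ∩ Ici w :=
    fun o => ⟨T ∩ Ici (o.elim top (↑)), _, rfl⟩
  have le_of_eq : ∀ (a : T) (o : Option T), φ (some a) = φ o → o.elim top (↑) ≤ a := by
    intro a o h
    have ha : (a : α) ∈ (φ (some a)).1 := ⟨a.2, le_rfl⟩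
    rw [h] at ha
    exact ha.2
  rw [← Finite.card_option]
  refine (Nat.card_eq_of_bijective φ ⟨?_, ?_⟩).symm
  · rintro (_ | a) (_ | b) h
    · rfl
    · exact absurd (le_of_eq b none h.symm) ((hM b.2).trans_lt htop).not_ge
    · exact absurd (le_of_eq a none h) ((hM a.2).trans_lt htop).not_ge
    · exact congrArg some <|
        Subtype.ext ((le_of_eq b (some a) h.symm).antisymm (le_of_eq a (some b) h))
  · rintro ⟨_, w, rfl⟩
    rcases (T ∩ Ici w).eq_empty_or_nonempty with h | h
    · exact ⟨none, Subtype.ext (hempty.trans h.symm)⟩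
    · obtain ⟨t, ⟨htT, hwt⟩, hmin⟩ := exists_min_image _ id (hT.inter_of_left _) h
      refine ⟨some ⟨t, htT⟩, Subtype.ext ?_⟩
      ext x
      exact ⟨fun ⟨hx, htx⟩ => ⟨hx, hwt.trans htx⟩, fun hx => ⟨hx.1, hmin x hx⟩⟩

theorem card_setOf_eq_biUnion {α ι β : Type*} [Nonempty β] (π : α → ι) (P : Finset ι)
    (f : ι → β → Set α) (hf : ∀ i b, f i b ⊆ π ⁻¹' {i}) :
    Nat.card {A : Set α | ∃ w : ι → β, A = ⋃ i ∈ P, f i (w i)} =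
      ∏ i ∈ P, Nat.card (range (f i)) := by
  classical
  let Φ : (∀ i : P, range (f i)) → Set α := fun g => ⋃ i, (g i : Set α)
  have hfiber : ∀ g i, Φ g ∩ π ⁻¹' {i.1} = g i := by
    intro g i
    ext x
    simp only [Φ, mem_inter_iff, mem_iUnion, mem_preimage, mem_singleton_iff]
    constructor
    · rintro ⟨⟨j, hj⟩, hπ⟩
      obtain ⟨b, hb⟩ := (g j).2
      have hπj : π x = j := hf _ _ (hb ▸ hj)
      obtain rfl : j = i := Subtype.ext (hπj.symm.trans hπ)
      exact hj
    · intro hx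
      obtain ⟨b, hb⟩ := (g i).2
      exact ⟨⟨i, hx⟩, hf _ _ (hb ▸ hx)⟩
  have hinj : Function.Injective Φ := fun g g' h =>
    funext fun i => Subtype.ext (by rw [← hfiber g, ← hfiber g', h])
  have hrange : {A : Set α | ∃ w : ι → β, A = ⋃ i ∈ P, f i (w i)} = range Φ := by
    ext A
    constructor
    · rintro ⟨w, rfl⟩
      refine ⟨fun i => ⟨f i (w i), w i, rfl⟩, ?_⟩
      simp [Φ, iUnion_subtype]
    · rintro ⟨g, rfl⟩
      choose w hw using fun i : P => (g i).2
      refine ⟨fun i => if h : i ∈ P then w ⟨i, h⟩ else Classical.arbitrary β, ?_⟩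
      simp only [Φ, iUnion_subtype]
      exact iUnion₂_congr fun i hi => by rw [dif_pos hi]; exact (hw ⟨i, hi⟩).symm
  rw [hrange, Nat.card_range_of_injective hinj, Nat.card_pi,
    Finset.prod_coe_sort P fun i => Nat.card (range (f i))]

section Tableau

variable (L : ℕ → ℕ → ℂ) (p u : ℕ)

def Linked (s : ℕ) : Prop := 1 ≤ s ∧ s ≤ p ∧ ∃ t : ℤ, L p s - L (p - 1) u = t

def linkOffsets : Set ℤ := {t | ∃ s, 1 ≤ s ∧ s ≤ p ∧ L p s - L (p - 1) u = t}

def omegaWithOffsets (U : Set ℤ) : Set (ℕ × ℕ × ℕ) :=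
  {x | x.1 = p ∧ x.2.2 = u ∧ 1 ≤ x.2.1 ∧ x.2.1 ≤ p ∧ ∃ t ∈ U, L p x.2.1 - L (p - 1) u = t}

variable {L p u}

theorem omegaPlusPU_eq_omegaWithOffsets {z : ℕ → ℕ → ℤ} {w : ℤ}
    (h : ∀ s, Linked L p u s → z (p - 1) u - z p s = w) :
    OmegaPlusPU L z p u = omegaWithOffsets L p u (Ici w) := by
  ext ⟨a, s, b⟩
  simp only [OmegaPlusPU, omegaWithOffsets, mem_ofPred_eq, mem_Ici]
  refine and_congr_right fun ha => and_congr_right fun hb => ?_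
  subst ha hb
  refine and_congr_right fun hs => and_congr_right fun hsp => ?_
  have hx : L a s + (z a s : ℂ) - (L (a - 1) b + (z (a - 1) b : ℂ)) =
      L a s - L (a - 1) b + ((z a s - z (a - 1) b : ℤ) : ℂ) := by push_cast; ring
  rw [hx, exists_natCast_eq_add_intCast_iff]
  constructor
  · rintro ⟨t, ht, hle⟩
    exact ⟨t, by rw [← h s ⟨hs, hsp, t, ht⟩]; omega, ht⟩
  · rintro ⟨t, hle, ht⟩
    exact ⟨t, ht, by have := h s ⟨hs, hsp, t, ht⟩; omega⟩

theorem omegaWithOffsets_subset (U : Set ℤ) :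
    omegaWithOffsets L p u U ⊆ (fun x => (x.1, x.2.2)) ⁻¹' {(p, u)} :=
  fun _ hx => by simp [hx.1, hx.2.1]

theorem omegaWithOffsets_inter_linkOffsets (U : Set ℤ) :
    omegaWithOffsets L p u (linkOffsets L p u ∩ U) = omegaWithOffsets L p u U := by
  ext x
  simp only [omegaWithOffsets, linkOffsets, mem_ofPred_eq, mem_inter_iff]
  constructor
  · rintro ⟨ha, hb, hs, hsp, t, ⟨-, htU⟩, ht⟩
    exact ⟨ha, hb, hs, hsp, t, htU, ht⟩
  · rintro ⟨ha, hb, hs, hsp, t, htU, ht⟩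
    exact ⟨ha, hb, hs, hsp, t, ⟨⟨_, hs, hsp, ht⟩, htU⟩, ht⟩

theorem injOn_omegaWithOffsets :
    InjOn (omegaWithOffsets L p u) {U | U ⊆ linkOffsets L p u} := by
  have mem_iff : ∀ {U}, U ⊆ linkOffsets L p u → ∀ t, t ∈ U ↔
      ∃ s, (p, s, u) ∈ omegaWithOffsets L p u U ∧ L p s - L (p - 1) u = t := by
    intro U hU t
    constructor
    · intro htU
      obtain ⟨s, hs, hsp, ht⟩ := hU htU
      exact ⟨s, ⟨rfl, rfl, hs, hsp, t, htU, ht⟩, ht⟩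
    · rintro ⟨s, ⟨-, -, -, -, t', ht'U, ht'⟩, ht⟩
      rwa [← Int.cast_inj.mp (ht'.symm.trans ht)]
  intro U hU V hV h
  ext t
  rw [mem_iff hU, mem_iff hV, h]

theorem linkOffsets_finite : (linkOffsets L p u).Finite := by
  refine Finite.of_finite_image (f := ((↑) : ℤ → ℂ)) ?_ Int.cast_injective.injOn
  refine ((finite_Icc 1 p).image fun s => L p s - L (p - 1) u).subset ?_
  rintro _ ⟨t, ⟨s, hs, hsp, ht⟩, rfl⟩
  exact ⟨s, ⟨hs, hsp⟩, ht⟩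

theorem dPU_eq_card_linkOffsets : dPU L p u = Nat.card (linkOffsets L p u) := by
  have himage : {v : ℂ | ∃ s, 1 ≤ s ∧ s ≤ p ∧ L p s = v ∧ ∃ t : ℤ, L p s - L (p - 1) u = t} =
      (fun t : ℤ => L (p - 1) u + t) '' linkOffsets L p u := by
    ext v
    constructor
    · rintro ⟨s, hs, hsp, rfl, t, ht⟩
      exact ⟨t, ⟨s, hs, hsp, ht⟩, (eq_add_of_sub_eq' ht).symm⟩
    · rintro ⟨t, ⟨s, hs, hsp, ht⟩, rfl⟩
      exact ⟨s, hs, hsp, eq_add_of_sub_eq' ht, t, ht⟩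
  rw [dPU, himage, Nat.card_image_of_injective]
  exact fun a b hab => Int.cast_injective (add_left_cancel hab)

theorem card_range_omegaWithOffsets_Ici :
    Nat.card (range fun w => omegaWithOffsets L p u (Ici w)) = dPU L p u + 1 := by
  have hrange : (range fun w => omegaWithOffsets L p u (Ici w)) =
      omegaWithOffsets L p u '' range fun w => linkOffsets L p u ∩ Ici w := by
    rw [← range_comp]
    simp only [Function.comp_def, omegaWithOffsets_inter_linkOffsets]
  rw [hrange, Nat.card_image_of_injOn (injOn_omegaWithOffsets.mono ?_),
    card_range_inter_Ici linkOffsets_finite, dPU_eq_card_linkOffsets]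
  rintro _ ⟨w, rfl⟩
  exact inter_subset_left

end Tableau

def IsGenericTableau (n : ℕ) (L : ℕ → ℕ → ℂ) : Prop :=
  ∀ k i j, k ≤ n - 1 → 1 ≤ i → i ≤ k → 1 ≤ j → j ≤ k → i ≠ j →
    ¬ ∃ t : ℤ, L k i - L k j = (t : ℂ)

open Classical in
noncomputable def linkedIndex (L : ℕ → ℕ → ℂ) (p u : ℕ) : ℕ :=
  if h : ∃ s, Linked L p u s then h.choose else 0

theorem linkedIndex_linked {L : ℕ → ℕ → ℂ} {p u s : ℕ} (hs : Linked L p u s) :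
    Linked L p u (linkedIndex L p u) := by
  have h : ∃ s, Linked L p u s := ⟨s, hs⟩
  rw [linkedIndex, dif_pos h]
  exact h.choose_spec

-- rows are filled from the top down, so that every block `(p, u)` gets threshold `w p u`
noncomputable def realizingShift (L : ℕ → ℕ → ℂ) (n : ℕ) (w : ℕ → ℕ → ℤ) (k u : ℕ) : ℤ :=
  if k < n then realizingShift L n w (k + 1) (linkedIndex L (k + 1) u) + w (k + 1) u else 0
termination_by n - k

theorem realizingShift_top (L : ℕ → ℕ → ℂ) (n : ℕ) (w : ℕ → ℕ → ℤ) (j : ℕ) :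
    realizingShift L n w n j = 0 := by
  rw [realizingShift, if_neg (lt_irrefl n)]

theorem realizingShift_pred (L : ℕ → ℕ → ℂ) {n p : ℕ} (w : ℕ → ℕ → ℤ) (hp : 1 ≤ p)
    (hpn : p ≤ n) (u : ℕ) :
    realizingShift L n w (p - 1) u =
      realizingShift L n w p (linkedIndex L p u) + w p u := by
  rw [realizingShift, if_pos (by omega), Nat.sub_add_cancel hp]

def blockIndices (n : ℕ) : Finset (ℕ × ℕ) :=
  (Finset.Icc 2 n ×ˢ Finset.Icc 1 n).filter fun i => i.2 ≤ i.1 - 1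

theorem mem_blockIndices {n : ℕ} {i : ℕ × ℕ} :
    i ∈ blockIndices n ↔ i.1 ∈ Finset.Icc 2 n ∧ i.2 ∈ Finset.Icc 1 (i.1 - 1) := by
  simp only [blockIndices, Finset.mem_filter, Finset.mem_product, Finset.mem_Icc]
  omega

theorem omegaPlusFull_eq_biUnion (n : ℕ) (L : ℕ → ℕ → ℂ) (z : ℕ → ℕ → ℤ) :
    OmegaPlusFull n L z = ⋃ i ∈ blockIndices n, OmegaPlusPU L z i.1 i.2 := by
  ext ⟨a, s, b⟩
  simp only [OmegaPlusFull, OmegaPlusPU, mem_ofPred_eq, mem_iUnion, mem_blockIndices,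
    Finset.mem_Icc, exists_prop, Prod.exists]
  constructor
  · rintro ⟨ha, han, hs, hsa, hb, hba, hm⟩
    exact ⟨a, b, ⟨⟨ha, han⟩, hb, hba⟩, rfl, rfl, hs, hsa, hm⟩
  · rintro ⟨a, b, ⟨⟨ha, han⟩, hb, hba⟩, rfl, rfl, hs, hsa, hm⟩
    exact ⟨ha, han, hs, hsa, hb, hba, hm⟩

section Generic

variable {n : ℕ} {L : ℕ → ℕ → ℂ}

theorem IsGenericTableau.linked_unique (hgen : IsGenericTableau n L) {p u s s' : ℕ}
    (hp : p ≤ n - 1) (hs : Linked L p u s) (hs' : Linked L p u s') : s = s' := by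
  obtain ⟨hs1, hsp, t, ht⟩ := hs
  obtain ⟨hs'1, hs'p, t', ht'⟩ := hs'
  by_contra hne
  exact hgen p s s' hp hs1 hsp hs'1 hs'p hne ⟨t - t', by push_cast; linear_combination ht - ht'⟩

-- below the top row only one entry is linked; in the top row `z` vanishes
theorem IsGenericTableau.apply_linked_eq (hgen : IsGenericTableau n L) {z : ℕ → ℕ → ℤ}
    (hz : ∀ j, z n j = 0) {p u s : ℕ} (hpn : p ≤ n) (hs : Linked L p u s) :
    z p s = z p (linkedIndex L p u) := by
  rcases hpn.eq_or_lt with rfl | hlt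
  · rw [hz, hz]
  · rw [← hgen.linked_unique (by omega) hs (linkedIndex_linked hs)]

theorem IsGenericTableau.omegaPlusPU_eq (hgen : IsGenericTableau n L) {z : ℕ → ℕ → ℤ}
    (hz : ∀ j, z n j = 0) {p u : ℕ} (hpn : p ≤ n) :
    OmegaPlusPU L z p u =
      omegaWithOffsets L p u (Ici (z (p - 1) u - z p (linkedIndex L p u))) :=
  omegaPlusPU_eq_omegaWithOffsets fun _ hs => by rw [hgen.apply_linked_eq hz hpn hs]

theorem IsGenericTableau.omegaPlusPU_realizingShift (hgen : IsGenericTableau n L)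
    (w : ℕ → ℕ → ℤ) {p : ℕ} (hp : 1 ≤ p) (hpn : p ≤ n) (u : ℕ) :
    OmegaPlusPU L (realizingShift L n w) p u = omegaWithOffsets L p u (Ici (w p u)) := by
  rw [hgen.omegaPlusPU_eq (realizingShift_top L n w) hpn, realizingShift_pred L w hp hpn,
    add_sub_cancel_left]

theorem IsGenericTableau.setOf_omegaPlusPU_eq_range (hgen : IsGenericTableau n L) {p : ℕ}
    (hp : 1 ≤ p) (hpn : p ≤ n) (u : ℕ) :
    {A | ∃ z : ℕ → ℕ → ℤ, (∀ j, z n j = 0) ∧ A = OmegaPlusPU L z p u} =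
      range fun w => omegaWithOffsets L p u (Ici w) := by
  ext A
  constructor
  · rintro ⟨z, hz, rfl⟩
    exact ⟨_, (hgen.omegaPlusPU_eq hz hpn).symm⟩
  · rintro ⟨w, rfl⟩
    exact ⟨realizingShift L n fun _ _ => w, realizingShift_top L n _,
      (hgen.omegaPlusPU_realizingShift (fun _ _ => w) hp hpn u).symm⟩

theorem IsGenericTableau.setOf_omegaPlusFull_eq (hgen : IsGenericTableau n L) :
    {A | ∃ z : ℕ → ℕ → ℤ, (∀ j, z n j = 0) ∧ A = OmegaPlusFull n L z} =
      {A | ∃ w : ℕ × ℕ → ℤ,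
        A = ⋃ i ∈ blockIndices n, omegaWithOffsets L i.1 i.2 (Ici (w i))} := by
  have bounds : ∀ {i}, i ∈ blockIndices n → 1 ≤ i.1 ∧ i.1 ≤ n := fun hi => by
    have := Finset.mem_Icc.1 (mem_blockIndices.1 hi).1
    omega
  ext A
  constructor
  · rintro ⟨z, hz, rfl⟩
    refine ⟨fun i => z (i.1 - 1) i.2 - z i.1 (linkedIndex L i.1 i.2), ?_⟩
    rw [omegaPlusFull_eq_biUnion]
    exact iUnion₂_congr fun i hi => hgen.omegaPlusPU_eq hz (bounds hi).2
  · rintro ⟨w, rfl⟩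
    refine ⟨realizingShift L n fun p u => w (p, u), realizingShift_top L n _, ?_⟩
    rw [omegaPlusFull_eq_biUnion]
    exact iUnion₂_congr fun i hi => (hgen.omegaPlusPU_realizingShift (fun p u => w (p, u))
      (bounds hi).1 (bounds hi).2 i.2).symm

end Generic

open Finset in
theorem number_of_irreducibles_in_generic_block_general
    (n : ℕ) (L : ℕ → ℕ → ℂ)
    (hgen : ∀ k i j, k ≤ n - 1 → 1 ≤ i → i ≤ k → 1 ≤ j → j ≤ k → i ≠ j →
      ¬ ∃ t : ℤ, L k i - L k j = (t : ℂ)) :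
    (∀ p u, 1 < p → p ≤ n → 1 ≤ u → u ≤ p - 1 →
      Nat.card {A : Set (ℕ × ℕ × ℕ) |
        ∃ z : ℕ → ℕ → ℤ, (∀ j, z n j = 0) ∧ A = OmegaPlusPU L z p u} = dPU L p u + 1) ∧
    Nat.card {A : Set (ℕ × ℕ × ℕ) |
        ∃ z : ℕ → ℕ → ℤ, (∀ j, z n j = 0) ∧ A = OmegaPlusFull n L z} =
      ∏ p ∈ Icc 2 n, ∏ u ∈ Icc 1 (p - 1), (dPU L p u + 1) := by
  have hgen : IsGenericTableau n L := hgen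
  constructor
  · intro p u hp hpn _ _
    rw [hgen.setOf_omegaPlusPU_eq_range hp.le hpn, card_range_omegaWithOffsets_Ici]
  · rw [hgen.setOf_omegaPlusFull_eq,
      card_setOf_eq_biUnion (fun x : ℕ × ℕ × ℕ => (x.1, x.2.2)) (blockIndices n)
        (fun i w => omegaWithOffsets L i.1 i.2 (Ici w)) fun _ _ => omegaWithOffsets_subset _,
      prod_finset_product _ (Icc 2 n) (fun p => Icc 1 (p - 1)) fun _ => mem_blockIndices]
    simp only [card_range_omegaWithOffsets_Ici]

open Finset in
/-- Theorem 7.5: for a generic tableau `T(L)` of height `n`, the number of distinct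
sets `Ω⁺_{p,u}(T(L+z))` equals `d_{pu}(T(L)) + 1`, and the number of distinct sets
`Ω⁺(T(L+z))` equals `∏_{1 ≤ u ≤ p-1 < n} (d_{pu}(T(L)) + 1)`. -/
theorem number_of_irreducibles_in_generic_block
    (n : ℕ) (hn : 2 ≤ n) (L : ℕ → ℕ → ℂ)
    (hgen : ∀ k i j, k ≤ n - 1 → 1 ≤ i → i ≤ k → 1 ≤ j → j ≤ k → i ≠ j →
      ¬ ∃ t : ℤ, L k i - L k j = (t : ℂ)) :
    (∀ p u, 1 < p → p ≤ n → 1 ≤ u → u ≤ p - 1 →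
      Nat.card {A : Set (ℕ × ℕ × ℕ) |
        ∃ z : ℕ → ℕ → ℤ, (∀ j, z n j = 0) ∧ A = OmegaPlusPU L z p u} = dPU L p u + 1) ∧
    Nat.card {A : Set (ℕ × ℕ × ℕ) |
        ∃ z : ℕ → ℕ → ℤ, (∀ j, z n j = 0) ∧ A = OmegaPlusFull n L z} =
      ∏ p ∈ Icc 2 n, ∏ u ∈ Icc 1 (p - 1), (dPU L p u + 1) :=
  number_of_irreducibles_in_generic_block_general n L hgen
end

section
/- Let A₀ ⊆ A₁ ⊆ Ω be finite sets with A₀ = Ω⁺(T(L)) and A₁ = Ω⁺(T(L+z)) for a generic tableau T(L) of height n and 0 ≠ z ∈ ℤ^{n(n-1)/2}. Then there exist indices (i,j) with 1 ≤ j ≤ i ≤ n-1 and z_{ij} ≠ 0 such that Ω⁺(T(L)) ⊆ Ω⁺(T(L + z_{ij}δ^{ij})) ⊆ Ω⁺(T(L+z)). -/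
/-- The set `Ω⁺(T(R))` of a tableau of height `n` given by the entry function `R`. -/
def OmegaPlusSet (n : ℕ) (R : ℕ → ℕ → ℂ) : Set (ℕ × ℕ × ℕ) :=
  {t | 1 < t.1 ∧ t.1 ≤ n ∧ 1 ≤ t.2.1 ∧ t.2.1 ≤ t.1 ∧ 1 ≤ t.2.2 ∧ t.2.2 ≤ t.1 - 1 ∧
    ∃ m : ℕ, R t.1 t.2.1 - R (t.1 - 1) t.2.2 = (m : ℂ)}

/-- From a natural representation and a nonnegativity bound, produce a shifted
natural representation. -/
private lemma castX {c : ℂ} {m : ℕ} {a : ℤ} (h : c = (m : ℂ)) (ha : 0 ≤ (m : ℤ) + a) :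
    ∃ m' : ℕ, c + (a : ℂ) = (m' : ℂ) := by
  refine ⟨((m : ℤ) + a).toNat, ?_⟩
  have h2 : ((((m : ℤ) + a).toNat : ℕ) : ℂ) = (((m : ℤ) + a : ℤ) : ℂ) := by
    exact_mod_cast Int.toNat_of_nonneg ha
  rw [h, h2]; push_cast; ring

/-- Condition A1 at `(i,j)`. -/
private def CondA1 (L : ℕ → ℕ → ℂ) (z : ℕ → ℕ → ℤ) (i j : ℕ) : Prop :=
  ∀ u m : ℕ, 1 ≤ u → u ≤ i - 1 → L i j - L (i - 1) u = (m : ℂ) → 0 ≤ (m : ℤ) + z i j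

/-- Condition B1 at `(i,j)`. -/
private def CondB1 (L : ℕ → ℕ → ℂ) (z : ℕ → ℕ → ℤ) (i j : ℕ) : Prop :=
  ∀ u m : ℕ, 1 ≤ u → u ≤ i - 1 → L i j + (z i j : ℂ) - L (i - 1) u = (m : ℂ) →
    0 ≤ (m : ℤ) - z (i - 1) u

/-- Condition A2 at `(i,j)`. -/
private def CondA2 (L : ℕ → ℕ → ℂ) (z : ℕ → ℕ → ℤ) (i j : ℕ) : Prop :=
  ∀ s m : ℕ, 1 ≤ s → s ≤ i + 1 → L (i + 1) s - L i j = (m : ℂ) → 0 ≤ (m : ℤ) - z i j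

/-- Condition B2 at `(i,j)`. -/
private def CondB2 (L : ℕ → ℕ → ℂ) (z : ℕ → ℕ → ℤ) (i j : ℕ) : Prop :=
  ∀ s m : ℕ, 1 ≤ s → s ≤ i + 1 → L (i + 1) s - L i j - (z i j : ℂ) = (m : ℂ) →
    0 ≤ (m : ℤ) + z (i + 1) s

/-- The descent: starting from an entry where the upper conditions hold, descend
the (unique, by genericity) chain of integrally linked entries until all four
conditions hold. -/
private lemma descend (n : ℕ) (L : ℕ → ℕ → ℂ)
    (hgen : ∀ k i j, k ≤ n - 1 → 1 ≤ i → i ≤ k → 1 ≤ j → j ≤ k → i ≠ j →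
      ¬ ∃ t : ℤ, L k i - L k j = (t : ℂ))
    (z : ℕ → ℕ → ℤ)
    (hsubZ : ∀ p s u, 1 < p → p ≤ n → 1 ≤ s → s ≤ p → 1 ≤ u → u ≤ p - 1 →
      ∀ m : ℕ, L p s - L (p - 1) u = (m : ℂ) → 0 ≤ (m : ℤ) + z p s - z (p - 1) u) :
    ∀ i j, 1 ≤ j → j ≤ i → i ≤ n - 1 → z i j ≠ 0 → CondA2 L z i j → CondB2 L z i j →
    ∃ i' j', 1 ≤ j' ∧ j' ≤ i' ∧ i' ≤ n - 1 ∧ z i' j' ≠ 0 ∧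
      CondA1 L z i' j' ∧ CondB1 L z i' j' ∧ CondA2 L z i' j' ∧ CondB2 L z i' j' := by
  intro i
  induction i using Nat.strong_induction_on with
  | _ i IH =>
  intro j hj1 hj2 hi hz0 hA2 hB2
  by_cases hA1 : CondA1 L z i j
  · by_cases hB1 : CondB1 L z i j
    · exact ⟨i, j, hj1, hj2, hi, hz0, hA1, hB1, hA2, hB2⟩
    · -- B1 fails at (i,j)
      simp only [CondB1] at hB1
      push_neg at hB1
      obtain ⟨u, m, hu1, hu2, hdiff, hneg⟩ := hB1
      have hi2 : 2 ≤ i := by omega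
      have hii : i - 1 + 1 = i := by omega
      have hzb : 0 < z (i - 1) u := by omega
      -- there is no natural m₀ with L i j - L (i-1) u = m₀
      have hw : ∀ m₀ : ℕ, L i j - L (i - 1) u = (m₀ : ℂ) → False := by
        intro m₀ h₀
        have hstep := hsubZ i j u (by omega) (by omega) hj1 hj2 hu1 hu2 m₀ h₀
        have hmm : (m₀ : ℤ) + z i j = (m : ℤ) := by
          have h' : ((m₀ : ℤ) : ℂ) + ((z i j : ℤ) : ℂ) = ((m : ℤ) : ℂ) := by
            push_cast
            linear_combination hdiff - h₀
          exact_mod_cast h'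
        omega
      have hA2' : CondA2 L z (i - 1) u := by
        intro s m₀ hs1 hs2 hseq
        rw [hii] at hseq hs2
        by_cases hsj : s = j
        · rw [hsj] at hseq
          exact absurd hseq (hw m₀)
        · exact absurd ⟨(m₀ : ℤ) - (m : ℤ) + z i j, by push_cast; linear_combination hseq - hdiff⟩
            (hgen i s j hi hs1 hs2 hj1 hj2 hsj)
      have hB2' : CondB2 L z (i - 1) u := by
        intro s m₀ hs1 hs2 hseq
        rw [hii] at hseq hs2 ⊢
        by_cases hsj : s = j
        · rw [hsj] at hseq
          -- L i j - L (i-1) u = m₀ + z (i-1) u, a nonnegative integer: contradiction with hw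
          have hnn : 0 ≤ (m₀ : ℤ) + z (i - 1) u := by omega
          have heq : L i j - L (i - 1) u = (((m₀ : ℤ) + z (i - 1) u).toNat : ℂ) := by
            have h2 : (((((m₀ : ℤ) + z (i - 1) u).toNat : ℕ)) : ℂ)
                = ((((m₀ : ℤ) + z (i - 1) u) : ℤ) : ℂ) := by
              exact_mod_cast Int.toNat_of_nonneg hnn
            rw [h2]; push_cast; linear_combination hseq
          exact absurd heq (hw _)
        · exact absurd ⟨(m₀ : ℤ) + z (i - 1) u - (m : ℤ) + z i j,
            by push_cast; linear_combination hseq - hdiff⟩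
            (hgen i s j hi hs1 hs2 hj1 hj2 hsj)
      exact IH (i - 1) (by omega) u hu1 hu2 (by omega) (by omega) hA2' hB2'
  · -- A1 fails at (i,j)
    simp only [CondA1] at hA1
    push_neg at hA1
    obtain ⟨u, m, hu1, hu2, hdiff, hneg⟩ := hA1
    have hi2 : 2 ≤ i := by omega
    have hii : i - 1 + 1 = i := by omega
    have hstep := hsubZ i j u (by omega) (by omega) hj1 hj2 hu1 hu2 m hdiff
    have hzb : z (i - 1) u < 0 := by omega
    have hA2' : CondA2 L z (i - 1) u := by
      intro s m₀ hs1 hs2 hseq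
      rw [hii] at hseq hs2
      by_cases hsj : s = j
      · rw [hsj] at hseq
        have : (m₀ : ℤ) = (m : ℤ) := by exact_mod_cast hseq.symm.trans hdiff
        omega
      · exact absurd ⟨(m₀ : ℤ) - (m : ℤ), by push_cast; linear_combination hseq - hdiff⟩
          (hgen i s j hi hs1 hs2 hj1 hj2 hsj)
    have hB2' : CondB2 L z (i - 1) u := by
      intro s m₀ hs1 hs2 hseq
      rw [hii] at hseq hs2 ⊢
      by_cases hsj : s = j
      · rw [hsj] at hseq ⊢
        have hmm : (m : ℤ) - z (i - 1) u = (m₀ : ℤ) := by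
          have h' : ((m : ℤ) : ℂ) - ((z (i - 1) u : ℤ) : ℂ) = ((m₀ : ℤ) : ℂ) := by
            push_cast
            linear_combination hseq - hdiff
          exact_mod_cast h'
        omega
      · exact absurd ⟨(m₀ : ℤ) + z (i - 1) u - (m : ℤ),
          by push_cast; linear_combination hseq - hdiff⟩
          (hgen i s j hi hs1 hs2 hj1 hj2 hsj)
    exact IH (i - 1) (by omega) u hu1 hu2 (by omega) (by omega) hA2' hB2'

/-- Lemma 6.4 (connectedness): if `T(L)` is generic, `z ≠ 0` has zero top row and
`Ω⁺(T(L)) ⊆ Ω⁺(T(L+z))`, then there is an index `(i,j)` with `z_{ij} ≠ 0` and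
`Ω⁺(T(L)) ⊆ Ω⁺(T(L + z_{ij} δ^{ij})) ⊆ Ω⁺(T(L+z))`. -/
theorem connectedness_lemma
    (n : ℕ) (hn : 2 ≤ n) (L : ℕ → ℕ → ℂ)
    (hgen : ∀ k i j, k ≤ n - 1 → 1 ≤ i → i ≤ k → 1 ≤ j → j ≤ k → i ≠ j →
      ¬ ∃ t : ℤ, L k i - L k j = (t : ℂ))
    (z : ℕ → ℕ → ℤ) (hz : ∀ j, z n j = 0)
    (hz0 : ∃ i j, 1 ≤ j ∧ j ≤ i ∧ i ≤ n - 1 ∧ z i j ≠ 0)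
    (hsub : OmegaPlusSet n L ⊆
      OmegaPlusSet n (fun a b => L a b + (z a b : ℂ))) :
    ∃ i j, 1 ≤ j ∧ j ≤ i ∧ i ≤ n - 1 ∧ z i j ≠ 0 ∧
      OmegaPlusSet n L ⊆
        OmegaPlusSet n (fun a b =>
          L a b + (if a = i ∧ b = j then (z i j : ℂ) else 0)) ∧
      OmegaPlusSet n (fun a b =>
          L a b + (if a = i ∧ b = j then (z i j : ℂ) else 0)) ⊆
        OmegaPlusSet n (fun a b => L a b + (z a b : ℂ)) := by
  classical
  -- integer form of the inclusion hypothesis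
  have hsubZ : ∀ p s u, 1 < p → p ≤ n → 1 ≤ s → s ≤ p → 1 ≤ u → u ≤ p - 1 →
      ∀ m : ℕ, L p s - L (p - 1) u = (m : ℂ) → 0 ≤ (m : ℤ) + z p s - z (p - 1) u := by
    intro p s u h1 h2 h3 h4 h5 h6 m hm
    have hmem := hsub (show (p, s, u) ∈ OmegaPlusSet n L from ⟨h1, h2, h3, h4, h5, h6, m, hm⟩)
    obtain ⟨-, -, -, -, -, -, m', hm'⟩ := hmem
    simp only at hm'
    have h' : ((m : ℤ) : ℂ) + ((z p s : ℤ) : ℂ) - ((z (p - 1) u : ℤ) : ℂ) = ((m' : ℤ) : ℂ) := by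
      push_cast
      linear_combination hm' - hm
    have : (m : ℤ) + z p s - z (p - 1) u = (m' : ℤ) := by exact_mod_cast h'
    omega
  -- pick the topmost row (≤ n-1) containing a nonzero entry of z
  set P : ℕ → Prop := fun k => ∃ j, 1 ≤ j ∧ j ≤ k ∧ z k j ≠ 0 with hP
  obtain ⟨i₀, j₀, hj₀1, hj₀2, hi₀, hz₀⟩ := hz0
  have hPK : P (Nat.findGreatest P (n - 1)) :=
    Nat.findGreatest_spec hi₀ ⟨j₀, hj₀1, hj₀2, hz₀⟩
  set K := Nat.findGreatest P (n - 1) with hKdef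
  have hKle : K ≤ n - 1 := Nat.findGreatest_le _
  obtain ⟨j, hj1, hj2, hzK⟩ := hPK
  have hK1 : 1 ≤ K := le_trans hj1 hj2
  -- the row above K has vanishing z in the relevant range
  have hztop : ∀ s, 1 ≤ s → s ≤ K + 1 → z (K + 1) s = 0 := by
    intro s hs1 hs2
    by_cases hKn : K + 1 = n
    · rw [hKn]; exact hz s
    · by_contra hne
      have hnot : ¬ P (K + 1) :=
        Nat.findGreatest_is_greatest (P := P) (n := n - 1) (by omega) (by omega)
      exact hnot ⟨s, hs1, hs2, hne⟩
  -- upper conditions hold at (K, j)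
  have hA2K : CondA2 L z K j := by
    intro s m hs1 hs2 heq
    have hstep := hsubZ (K + 1) s j (by omega) (by omega) hs1 hs2 hj1 (by omega) m
      (by simpa using heq)
    rw [hztop s hs1 hs2] at hstep
    simp only [Nat.add_sub_cancel] at hstep
    omega
  have hB2K : CondB2 L z K j := by
    intro s m hs1 hs2 heq
    rw [hztop s hs1 hs2]
    omega
  obtain ⟨i, j', hj'1, hj'2, hi', hznz, hA1, hB1, hA2, hB2⟩ :=
    descend n L hgen z hsubZ K j hj1 hj2 hKle hzK hA2K hB2K
  refine ⟨i, j', hj'1, hj'2, hi', hznz, ?_, ?_⟩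
  · -- first inclusion
    rintro ⟨p, s, u⟩ ht
    simp only [OmegaPlusSet, Set.mem_setOf_eq] at ht ⊢
    obtain ⟨h1, h2, h3, h4, h5, h6, m, hm⟩ := ht
    refine ⟨h1, h2, h3, h4, h5, h6, ?_⟩
    by_cases hps : p = i ∧ s = j'
    · have hne : ¬(p - 1 = i ∧ u = j') := by
        rintro ⟨h, -⟩; omega
      rw [if_pos hps, if_neg hne]
      rw [hps.1, hps.2] at hm
      obtain ⟨m', hm'⟩ := castX hm (hA1 u m h5 (by omega) hm)
      refine ⟨m', ?_⟩
      rw [hps.1, hps.2]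
      linear_combination hm'
    · by_cases hpu : p - 1 = i ∧ u = j'
      · rw [if_neg hps, if_pos hpu]
        have hp : p = i + 1 := by omega
        rw [hp, Nat.add_sub_cancel, hpu.2] at hm
        obtain ⟨m', hm'⟩ := castX hm
          (show 0 ≤ (m : ℤ) + (-(z i j')) by
            have := hA2 s m h3 (by omega) hm; omega)
        refine ⟨m', ?_⟩
        rw [hp, Nat.add_sub_cancel, hpu.2]
        push_cast at hm'
        linear_combination hm'
      · rw [if_neg hps, if_neg hpu]
        exact ⟨m, by linear_combination hm⟩
  · -- second inclusion
    rintro ⟨p, s, u⟩ ht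
    simp only [OmegaPlusSet, Set.mem_setOf_eq] at ht ⊢
    obtain ⟨h1, h2, h3, h4, h5, h6, m, hm⟩ := ht
    refine ⟨h1, h2, h3, h4, h5, h6, ?_⟩
    by_cases hps : p = i ∧ s = j'
    · have hne : ¬(p - 1 = i ∧ u = j') := by
        rintro ⟨h, -⟩; omega
      rw [if_pos hps, if_neg hne] at hm
      rw [hps.1, hps.2] at hm ⊢
      have hm2 : L i j' + (z i j' : ℂ) - L (i - 1) u = (m : ℂ) := by linear_combination hm
      obtain ⟨m', hm'⟩ := castX hm2
        (show 0 ≤ (m : ℤ) + (-(z (i - 1) u)) by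
          have := hB1 u m h5 (by omega) hm2; omega)
      refine ⟨m', ?_⟩
      push_cast at hm'
      linear_combination hm'
    · by_cases hpu : p - 1 = i ∧ u = j'
      · rw [if_neg hps, if_pos hpu] at hm
        have hp : p = i + 1 := by omega
        rw [hp, Nat.add_sub_cancel, hpu.2] at hm ⊢
        have hm2 : L (i + 1) s - L i j' - (z i j' : ℂ) = (m : ℂ) := by
          linear_combination hm
        obtain ⟨m', hm'⟩ := castX hm2
          (show 0 ≤ (m : ℤ) + z (i + 1) s from hB2 s m h3 (by omega) hm2)
        exact ⟨m', by linear_combination hm'⟩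
      · rw [if_neg hps, if_neg hpu] at hm
        exact hsubZ p s u h1 h2 h3 h4 h5 h6 m (by linear_combination hm) |> fun hInt => by
          obtain ⟨m', hm'⟩ := castX (show L p s - L (p - 1) u = (m : ℂ) by linear_combination hm)
            (show 0 ≤ (m : ℤ) + (z p s - z (p - 1) u) by omega)
          refine ⟨m', ?_⟩
          push_cast at hm'
          linear_combination hm'
end

section
/- Suppose Γ is a commutative ℂ-subalgebra of an associative ℂ-algebra U, M is a U-module which decomposes as M = ⊕_χ M(χ) over characters χ : Γ → ℂ, where M(χ) = {v ∈ M : ∀ g ∈ Γ ∃ k, (g - χ(g))^k v = 0}, and dim M(χ₀) ≤ 1 for a fixed character χ₀. If every proper submodule N of M satisfies N = ⊕_χ (N ∩ M(χ)), then the sum of all submodules N with N ∩ M(χ₀) = 0 is again a submodule intersecting M(χ₀) trivially; hence if M is generated by any nonzero vector of M(χ₀), M has a unique maximal submodule among those avoiding M(χ₀), and a unique irreducible quotient N̄ with N̄(χ₀) ≠ 0. -/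
/-!
`M(χ)` is the simultaneous maximal generalized eigenspace of the operators `g ∈ Γ`, and the
direct-sum hypothesis says these subspaces are independent. A proper submodule avoiding `M(χ₀)`
is the sum of its pieces in the `M(χ)`, all with `χ ≠ χ₀`, so it lies in `⨆ χ ≠ χ₀, M(χ)`; hence
so does the sum of all of them, which therefore still meets `M(χ₀)` trivially. When a vector `v₀`
of the line `M(χ₀)` generates `M`, a submodule meeting `M(χ₀)` contains `v₀` and is all of `M`,
so that sum is the greatest proper submodule.
-/

namespace Algebra

variable {R A M ι : Type*} [CommRing R] [Ring A] [Algebra R A] [AddCommGroup M] [Module R M]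
  [Module A M] [IsScalarTower R A M]

theorem mem_iInf_maxGenEigenspace_lsmul (a : ι → A) (μ : ι → R) (v : M) :
    v ∈ ⨅ i, (lsmul R R M (a i)).maxGenEigenspace (μ i) ↔
      ∀ i, ∃ k : ℕ, (a i - algebraMap R A (μ i)) ^ k • v = 0 := by
  have lsmul_sub (i : ι) :
      lsmul R R M (a i) - μ i • 1 = lsmul R R M (a i - algebraMap R A (μ i)) := by
    rw [map_sub, AlgHom.commutes, Algebra.algebraMap_eq_smul_one]
  simp only [Submodule.mem_iInf, Module.End.mem_maxGenEigenspace, lsmul_sub, ← map_pow,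
    lsmul_apply]

end Algebra

theorem iSupIndep_of_forall_fin_sum_eq_zero {R M ι : Type*} [Ring R] [AddCommGroup M]
    [Module R M] {E : ι → Submodule R M}
    (h : ∀ (κ : ℕ) (χ : Fin κ → ι) (w : Fin κ → M), Function.Injective χ →
      (∀ j, w j ∈ E (χ j)) → ∑ j, w j = 0 → ∀ j, w j = 0) :
    iSupIndep E := by
  rw [iSupIndep_iff_finsetSum_eq_zero_imp_eq_zero]
  intro s v hv hsum i hi
  let e := s.equivFin
  simpa using h s.card (fun j => e.symm j) (fun j => v (e.symm j))
    (Subtype.val_injective.comp e.symm.injective) (fun j => hv _ (e.symm j).2)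
    (by rw [e.symm.sum_comp (fun x : s => v x), Finset.sum_coe_sort, hsum]) (e ⟨i, hi⟩)

theorem iSupIndep.disjoint_sSup_of_le_iSup_inf {α ι : Type*} [CompleteLattice α] {E : ι → α}
    (hE : iSupIndep E) {i₀ : ι} {S : Set α} (hS : ∀ N ∈ S, N ≤ ⨆ i, N ⊓ E i)
    (hS₀ : ∀ N ∈ S, Disjoint N (E i₀)) : Disjoint (sSup S) (E i₀) := by
  have hle : sSup S ≤ ⨆ (i) (_ : i ≠ i₀), E i := by
    refine sSup_le fun N hN => (hS N hN).trans (iSup_le fun i => ?_)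
    by_cases hi : i = i₀
    · subst hi
      exact (hS₀ N hN).eq_bot.le.trans bot_le
    · exact inf_le_right.trans (le_iSup₂ (f := fun j (_ : j ≠ i₀) => E j) i hi)
  exact (hE i₀).symm.mono_left hle

namespace Submodule

variable {R A M ι : Type*} [CommSemiring R] [Semiring A] [Algebra R A] [AddCommMonoid M]
  [Module R M] [Module A M] [IsScalarTower R A M]

theorem disjoint_restrictScalars_sSup {E : ι → Submodule R M} (hE : iSupIndep E) {i₀ : ι}
    {S : Set (Submodule A M)}
    (hS : ∀ N ∈ S, N.restrictScalars R ≤ ⨆ i, N.restrictScalars R ⊓ E i)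
    (hS₀ : ∀ N ∈ S, Disjoint (N.restrictScalars R) (E i₀)) :
    Disjoint ((sSup S).restrictScalars R) (E i₀) := by
  rw [restrictScalars_sSup]
  refine hE.disjoint_sSup_of_le_iSup_inf ?_ ?_ <;> rintro _ ⟨N, hN, rfl⟩
  exacts [hS N hN, hS₀ N hN]

theorem disjoint_restrictScalars_of_span_singleton_eq_top {L : Submodule R M} {v₀ : M}
    (hv₀ : v₀ ∈ L) (hL : ∀ v ∈ L, ∀ w ∈ L, v ≠ 0 → ∃ c : R, w = c • v)
    (hspan : span A {v₀} = ⊤) {N : Submodule A M} (hN : N ≠ ⊤) :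
    Disjoint (N.restrictScalars R) L := by
  refine disjoint_def.2 fun v hvN hvL => by_contra fun hv => hN ?_
  obtain ⟨c, rfl⟩ := hL v hvL v₀ hv₀ hv
  rw [eq_top_iff, ← hspan, span_le, Set.singleton_subset_iff]
  exact N.smul_of_tower_mem c hvN

end Submodule

theorem unique_irreducible_with_generic_character_general
    {U : Type*} [Ring U] [Algebra ℂ U]
    (Γ : Subalgebra ℂ U)
    {M : Type*} [AddCommGroup M] [Module U M] [Module ℂ M] [IsScalarTower ℂ U M]
    (χ₀ : Γ →ₐ[ℂ] ℂ)
    (genEig : (Γ →ₐ[ℂ] ℂ) → Set M)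
    (hgenEig : ∀ χ (v : M), v ∈ genEig χ ↔
      ∀ g : Γ, ∃ k : ℕ, ((g : U) - algebraMap ℂ U (χ g)) ^ k • v = 0)
    (hdim : ∀ v ∈ genEig χ₀, ∀ w ∈ genEig χ₀, v ≠ 0 → ∃ c : ℂ, w = c • v)
    (hdecomp : ∀ N : Submodule U M, N ≠ ⊤ → ∀ v ∈ N,
      ∃ (κ : ℕ) (χ : Fin κ → (Γ →ₐ[ℂ] ℂ)) (w : Fin κ → M),
        Function.Injective χ ∧ (∀ j, w j ∈ N ∧ w j ∈ genEig (χ j)) ∧ v = ∑ j, w j)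
    (hindep : ∀ (κ : ℕ) (χ : Fin κ → (Γ →ₐ[ℂ] ℂ)) (w : Fin κ → M),
      Function.Injective χ → (∀ j, w j ∈ genEig (χ j)) → ∑ j, w j = 0 →
      ∀ j, w j = 0) :
    ((⨆ N ∈ {N : Submodule U M | ∀ v ∈ N, v ∈ genEig χ₀ → v = 0}, N :
        Submodule U M) ∈ {N : Submodule U M | ∀ v ∈ N, v ∈ genEig χ₀ → v = 0}) ∧
    (∀ v₀ ∈ genEig χ₀, v₀ ≠ 0 → Submodule.span U {v₀} = ⊤ →
      ∃! Nmax : Submodule U M,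
        (∀ v ∈ Nmax, v ∈ genEig χ₀ → v = 0) ∧
        (∀ N : Submodule U M, (∀ v ∈ N, v ∈ genEig χ₀ → v = 0) → N ≤ Nmax) ∧
        IsCoatom Nmax ∧ v₀ ∉ Nmax) := by
  set E : (Γ →ₐ[ℂ] ℂ) → Submodule ℂ M :=
    fun χ => ⨅ g : Γ, (Algebra.lsmul ℂ ℂ M (g : U)).maxGenEigenspace (χ g)
  obtain rfl : genEig = fun χ => (E χ : Set M) := funext fun χ => Set.ext fun v =>
    (hgenEig χ v).trans (Algebra.mem_iInf_maxGenEigenspace_lsmul _ _ v).symm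
  set S := {N : Submodule U M | ∀ v ∈ N, v ∈ E χ₀ → v = 0}
  have mem_S (N : Submodule U M) : N ∈ S ↔ Disjoint (N.restrictScalars ℂ) (E χ₀) :=
    (Submodule.disjoint_def (p := N.restrictScalars ℂ)).symm
  have sSup_mem_S : sSup S ∈ S := by
    by_cases htop : ⊤ ∈ S
    · exact fun v _ hv => htop v Submodule.mem_top hv
    refine (mem_S _).2 (Submodule.disjoint_restrictScalars_sSup
      (iSupIndep_of_forall_fin_sum_eq_zero hindep) (fun N hN v hv => ?_)
      fun N hN => (mem_S N).1 hN)
    obtain ⟨κ, χ, w, -, hw, rfl⟩ := hdecomp N (ne_of_mem_of_not_mem hN htop) v hv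
    exact Submodule.sum_mem _ fun j _ => Submodule.mem_iSup_of_mem (χ j) (hw j)
  rw [← sSup_eq_iSup]
  refine ⟨sSup_mem_S, fun v₀ hv₀ hv₀ne hspan => ?_⟩
  have proper_mem_S (N : Submodule U M) (hN : N ≠ ⊤) : N ∈ S := (mem_S N).2 <|
    Submodule.disjoint_restrictScalars_of_span_singleton_eq_top hv₀ hdim hspan hN
  have hv₀_notMem : v₀ ∉ sSup S := fun h => hv₀ne (sSup_mem_S v₀ h hv₀)
  refine ⟨sSup S, ⟨sSup_mem_S, fun N hN => le_sSup hN, ?_, hv₀_notMem⟩, ?_⟩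
  · exact isCoatom_iff_ge_of_le.2 ⟨fun h => hv₀_notMem (h ▸ Submodule.mem_top),
      fun N hN _ => le_sSup (proper_mem_S N hN)⟩
  · rintro N ⟨hN, hmax, -, -⟩
    exact le_antisymm (le_sSup (s := S) hN) (hmax _ sSup_mem_S)

/-- Abstract version of Theorem 5.4: if `M` decomposes over characters of a
commutative subalgebra `Γ`, with `dim M(χ₀) ≤ 1` and every proper submodule
decomposing compatibly, then the sum of all submodules avoiding `M(χ₀)` again
avoids `M(χ₀)`; hence if `M` is generated by a nonzero vector of `M(χ₀)`, there is
a unique greatest submodule avoiding `M(χ₀)`, it is a coatom (so the quotient is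
irreducible), and the quotient has nonzero `χ₀`-component. -/
theorem unique_irreducible_with_generic_character
    {U : Type*} [Ring U] [Algebra ℂ U]
    (Γ : Subalgebra ℂ U) (_hcomm : ∀ x y : Γ, x * y = y * x)
    {M : Type*} [AddCommGroup M] [Module U M] [Module ℂ M] [IsScalarTower ℂ U M]
    (χ₀ : Γ →ₐ[ℂ] ℂ)
    (genEig : (Γ →ₐ[ℂ] ℂ) → Set M)
    (hgenEig : ∀ χ (v : M), v ∈ genEig χ ↔
      ∀ g : Γ, ∃ k : ℕ, ((g : U) - algebraMap ℂ U (χ g)) ^ k • v = 0)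
    (hdim : ∀ v ∈ genEig χ₀, ∀ w ∈ genEig χ₀, v ≠ 0 → ∃ c : ℂ, w = c • v)
    (hdecomp : ∀ N : Submodule U M, N ≠ ⊤ → ∀ v ∈ N,
      ∃ (κ : ℕ) (χ : Fin κ → (Γ →ₐ[ℂ] ℂ)) (w : Fin κ → M),
        Function.Injective χ ∧ (∀ j, w j ∈ N ∧ w j ∈ genEig (χ j)) ∧ v = ∑ j, w j)
    (hindep : ∀ (κ : ℕ) (χ : Fin κ → (Γ →ₐ[ℂ] ℂ)) (w : Fin κ → M),
      Function.Injective χ → (∀ j, w j ∈ genEig (χ j)) → ∑ j, w j = 0 →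
      ∀ j, w j = 0) :
    ((⨆ N ∈ {N : Submodule U M | ∀ v ∈ N, v ∈ genEig χ₀ → v = 0}, N :
        Submodule U M) ∈ {N : Submodule U M | ∀ v ∈ N, v ∈ genEig χ₀ → v = 0}) ∧
    (∀ v₀ ∈ genEig χ₀, v₀ ≠ 0 → Submodule.span U {v₀} = ⊤ →
      ∃! Nmax : Submodule U M,
        (∀ v ∈ Nmax, v ∈ genEig χ₀ → v = 0) ∧
        (∀ N : Submodule U M, (∀ v ∈ N, v ∈ genEig χ₀ → v = 0) → N ≤ Nmax) ∧
        IsCoatom Nmax ∧ v₀ ∉ Nmax) :=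
  unique_irreducible_with_generic_character_general Γ χ₀ genEig hgenEig hdim hdecomp hindep
end
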